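/- arXiv:2106.04132 — 5 statements merged into one kernel-verified Lean document; each statement's English description precedes it below -/
import Mathlib

section
/- Let (T, μ, η, e) be an augmented monad on C, let M ⊆ Monad(C)/T and N ⊆ Fun(C^T, C)/U be subcategories. If every monad homomorphism h in M has an h-invariant inclusion Inv(h) in N and every natural transformation α in N has a stabilizer Stab(α) in M, then Inv : M^op → N and Stab : N → M^op are functors forming a Galois connection. -/
open CategoryTheory

universe v u

variable {C : Type u} [Category.{v} C]

/-- `S_h` fixes `V_α`: `(U ε) ∘ (h ⋆ α) = (e U) ∘ (h ⋆ α)`, componentwise. -/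
def Fixes {T S : Monad C} (e : (T : C ⥤ C) ⟶ 𝟭 C) (h : S ⟶ T)
    {V : T.Algebra ⥤ C} (α : V ⟶ T.forget) : Prop :=
  ∀ M : T.Algebra,
    (S : C ⥤ C).map (α.app M) ≫ h.app M.A ≫ M.a =
      (S : C ⥤ C).map (α.app M) ≫ h.app M.A ≫ e.app M.A

/-- The fix relation on the slice categories `Monad(C)/T` and `Fun(C^T, C)/U`. -/
def FixesO {T : Monad C} (e : (T : C ⥤ C) ⟶ 𝟭 C)
    (m : Over T) (n : Over (T.forget : T.Algebra ⥤ C)) : Prop :=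
  Fixes e m.hom n.hom

/-- `m` is the stabilizer of `n` (within the subcategory cut out by `P`). -/
def IsStabilizer {T : Monad C} (P : Over T → Prop) (e : (T : C ⥤ C) ⟶ 𝟭 C)
    (m : Over T) (n : Over (T.forget : T.Algebra ⥤ C)) : Prop :=
  FixesO e m n ∧ ∀ m' : Over T, P m' → FixesO e m' n → Nonempty (Unique (m' ⟶ m))

/-- `n` is the invariant inclusion for `m` (within the subcategory cut out by `Q`). -/
def IsInvariantIncl {T : Monad C} (Q : Over (T.forget : T.Algebra ⥤ C) → Prop)
    (e : (T : C ⥤ C) ⟶ 𝟭 C)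
    (n : Over (T.forget : T.Algebra ⥤ C)) (m : Over T) : Prop :=
  FixesO e m n ∧
    ∀ n' : Over (T.forget : T.Algebra ⥤ C), Q n' → FixesO e m n' →
      Nonempty (Unique (n' ⟶ n))

/-! Precomposition on either side preserves fixing, so the universal properties say that
`n ⟶ Inv m` and `m ⟶ Stab n` are subsingletons, each inhabited exactly when `m` fixes `n`.
Object maps with hom-sets of this shape always extend to an adjunction `Stab ⊣ Inv` between
`N` and `Mᵒᵖ`: the bijection of inhabited hom-sets supplies every morphism, and every equation
holds because the hom-sets are subsingletons. -/

namespace CategoryTheory.ContravariantGalois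

noncomputable section

variable {A B : Type*} [Category A] [Category B] {I : A → B} {S : B → A}
  (hIS : ∀ a b, Nonempty (b ⟶ I a) ↔ Nonempty (a ⟶ S b))

def rightAdjoint (hI : ∀ a b, Subsingleton (b ⟶ I a)) : Aᵒᵖ ⥤ B where
  obj a := I a.unop
  map {a a'} f := ((hIS a'.unop _).2 ⟨f.unop ≫ ((hIS a.unop _).1 ⟨𝟙 _⟩).some⟩).some
  map_id _ := (hI _ _).elim _ _
  map_comp _ _ := (hI _ _).elim _ _

def leftAdjoint (hS : ∀ a b, Subsingleton (a ⟶ S b)) : B ⥤ Aᵒᵖ where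
  obj b := Opposite.op (S b)
  map {b b'} g := Quiver.Hom.op ((hIS _ b).1 ⟨g ≫ ((hIS _ b').2 ⟨𝟙 _⟩).some⟩).some
  map_id _ := Quiver.Hom.unop_inj ((hS _ _).elim _ _)
  map_comp _ _ := Quiver.Hom.unop_inj ((hS _ _).elim _ _)

def adjunction (hI : ∀ a b, Subsingleton (b ⟶ I a)) (hS : ∀ a b, Subsingleton (a ⟶ S b)) :
    leftAdjoint hIS hS ⊣ rightAdjoint hIS hI :=
  Adjunction.mkOfHomEquiv
    { homEquiv := fun b a =>
        { toFun := fun f => ((hIS a.unop b).2 ⟨f.unop⟩).some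
          invFun := fun g => ((hIS a.unop b).1 ⟨g⟩).some.op
          left_inv := fun _ => Quiver.Hom.unop_inj ((hS _ _).elim _ _)
          right_inv := fun _ => (hI _ _).elim _ _ }
      homEquiv_naturality_left_symm := fun _ _ => Quiver.Hom.unop_inj ((hS _ _).elim _ _)
      homEquiv_naturality_right := fun _ _ => (hI _ _).elim _ _ }

end

end CategoryTheory.ContravariantGalois

-- Stated for an arbitrary `f` because in `Fixes`, rewriting is blocked by implicit arguments
-- mentioning `T.forget.obj M` where the morphisms live over `M.A`.
theorem CategoryTheory.NatTrans.map_comp_app_comp_eq_of_map_comp_app_comp_eq {S S' R : C ⥤ C}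
    (g : S' ⟶ S) (h : S ⟶ R) {X Y Z : C} (f : X ⟶ Y) {k k' : R.obj Y ⟶ Z}
    (H : S.map f ≫ h.app Y ≫ k = S.map f ≫ h.app Y ≫ k') :
    S'.map f ≫ (g ≫ h).app Y ≫ k = S'.map f ≫ (g ≫ h).app Y ≫ k' := by
  simp only [NatTrans.comp_app, Category.assoc, NatTrans.naturality_assoc, H]

section Fixes

variable {T : Monad C} {e : (T : C ⥤ C) ⟶ 𝟭 C}

theorem Fixes.comp_left {S S' : Monad C} {h : S ⟶ T} {V : T.Algebra ⥤ C}
    {α : V ⟶ T.forget} (hfix : Fixes e h α) (g : S' ⟶ S) : Fixes e (g ≫ h) α := fun M =>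
  NatTrans.map_comp_app_comp_eq_of_map_comp_app_comp_eq g.toNatTrans h.toNatTrans _ (hfix M)

theorem Fixes.comp_right {S : Monad C} {h : S ⟶ T} {V V' : T.Algebra ⥤ C}
    {α : V ⟶ T.forget} (hfix : Fixes e h α) (β : V' ⟶ V) : Fixes e h (β ≫ α) := by
  intro M
  simp only [NatTrans.comp_app, Functor.map_comp, Category.assoc, hfix M]

theorem FixesO.of_hom_left {m m' : Over T} {n : Over (T.forget : T.Algebra ⥤ C)}
    (hfix : FixesO e m n) (f : m' ⟶ m) : FixesO e m' n := by
  rw [FixesO, ← Over.w f]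
  exact hfix.comp_left f.left

theorem FixesO.of_hom_right {m : Over T} {n n' : Over (T.forget : T.Algebra ⥤ C)}
    (hfix : FixesO e m n) (g : n' ⟶ n) : FixesO e m n' := by
  rw [FixesO, ← Over.w g]
  exact hfix.comp_right g.left

end Fixes

section UniversalProperties

variable {T : Monad C} {e : (T : C ⥤ C) ⟶ 𝟭 C}

open ObjectProperty

theorem IsInvariantIncl.nonempty_hom_iff {Q : Over (T.forget : T.Algebra ⥤ C) → Prop}
    {n : FullSubcategory Q} {m : Over T} (h : IsInvariantIncl Q e n.obj m)
    (n' : FullSubcategory Q) : Nonempty (n' ⟶ n) ↔ FixesO e m n'.obj :=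
  (fullyFaithfulι Q).homEquiv.nonempty_congr.trans
    ⟨fun ⟨g⟩ => h.1.of_hom_right g,
      fun hfix => (h.2 n'.obj n'.property hfix).map (·.default)⟩

theorem IsInvariantIncl.subsingleton_hom {Q : Over (T.forget : T.Algebra ⥤ C) → Prop}
    {n : FullSubcategory Q} {m : Over T} (h : IsInvariantIncl Q e n.obj m)
    (n' : FullSubcategory Q) : Subsingleton (n' ⟶ n) := by
  refine ⟨fun g _ => ?_⟩
  obtain ⟨u⟩ := h.2 n'.obj n'.property (h.1.of_hom_right g.hom)
  exact hom_ext _ (Subsingleton.elim _ _)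

theorem IsStabilizer.nonempty_hom_iff {P : Over T → Prop}
    {m : FullSubcategory P} {n : Over (T.forget : T.Algebra ⥤ C)} (h : IsStabilizer P e m.obj n)
    (m' : FullSubcategory P) : Nonempty (m' ⟶ m) ↔ FixesO e m'.obj n :=
  (fullyFaithfulι P).homEquiv.nonempty_congr.trans
    ⟨fun ⟨f⟩ => h.1.of_hom_left f,
      fun hfix => (h.2 m'.obj m'.property hfix).map (·.default)⟩

theorem IsStabilizer.subsingleton_hom {P : Over T → Prop}
    {m : FullSubcategory P} {n : Over (T.forget : T.Algebra ⥤ C)} (h : IsStabilizer P e m.obj n)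
    (m' : FullSubcategory P) : Subsingleton (m' ⟶ m) := by
  refine ⟨fun f _ => ?_⟩
  obtain ⟨u⟩ := h.2 m'.obj m'.property (h.1.of_hom_left f.hom)
  exact hom_ext _ (Subsingleton.elim _ _)

end UniversalProperties

theorem inv_stab_galois_connection_general {T : Monad C}
    (e : (T : C ⥤ C) ⟶ 𝟭 C)
    (P : Over T → Prop) (Q : Over (T.forget : T.Algebra ⥤ C) → Prop)
    (hInv : ∀ m : ObjectProperty.FullSubcategory P, ∃ n : ObjectProperty.FullSubcategory Q,
      IsInvariantIncl Q e n.obj m.obj)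
    (hStab : ∀ n : ObjectProperty.FullSubcategory Q, ∃ m : ObjectProperty.FullSubcategory P,
      IsStabilizer P e m.obj n.obj) :
    ∃ (Inv : (ObjectProperty.FullSubcategory P)ᵒᵖ ⥤ ObjectProperty.FullSubcategory Q)
      (Stab : ObjectProperty.FullSubcategory Q ⥤ (ObjectProperty.FullSubcategory P)ᵒᵖ),
      (∀ m : (ObjectProperty.FullSubcategory P)ᵒᵖ, IsInvariantIncl Q e (Inv.obj m).obj m.unop.obj) ∧
      (∀ n : ObjectProperty.FullSubcategory Q, IsStabilizer P e ((Stab.obj n).unop).obj n.obj) ∧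
      Nonempty (Stab ⊣ Inv) ∧
      (∀ (n : ObjectProperty.FullSubcategory Q) (m : (ObjectProperty.FullSubcategory P)ᵒᵖ),
        Subsingleton (n ⟶ Inv.obj m)) := by
  choose Inv₀ hInv₀ using hInv
  choose Stab₀ hStab₀ using hStab
  have hIS : ∀ m n, Nonempty (n ⟶ Inv₀ m) ↔ Nonempty (m ⟶ Stab₀ n) := fun m n =>
    ((hInv₀ m).nonempty_hom_iff n).trans ((hStab₀ n).nonempty_hom_iff m).symm
  have hI : ∀ m n, Subsingleton (n ⟶ Inv₀ m) := fun m => (hInv₀ m).subsingleton_hom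
  have hS : ∀ m n, Subsingleton (m ⟶ Stab₀ n) := fun m n => (hStab₀ n).subsingleton_hom m
  exact ⟨ContravariantGalois.rightAdjoint hIS hI, ContravariantGalois.leftAdjoint hIS hS,
    fun m => hInv₀ m.unop, hStab₀, ⟨ContravariantGalois.adjunction hIS hI hS⟩,
    fun n m => hI m.unop n⟩

/-- if every `h` in `M` has an `h`-invariant inclusion in `N` and every
`α` in `N` has a stabilizer in `M`, then `Inv : Mᵒᵖ ⥤ N` and `Stab : N ⥤ Mᵒᵖ` are
functors forming a Galois connection (a contravariant adjunction with hom-sets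
having at most one element). -/
theorem inv_stab_galois_connection {T : Monad C}
    (e : (T : C ⥤ C) ⟶ 𝟭 C)
    (he₁ : ∀ X : C, T.η.app X ≫ e.app X = 𝟙 X)
    (he₂ : ∀ X : C, T.μ.app X ≫ e.app X = e.app ((T : C ⥤ C).obj X) ≫ e.app X)
    (P : Over T → Prop) (Q : Over (T.forget : T.Algebra ⥤ C) → Prop)
    (hInv : ∀ m : ObjectProperty.FullSubcategory P, ∃ n : ObjectProperty.FullSubcategory Q,
      IsInvariantIncl Q e n.obj m.obj)
    (hStab : ∀ n : ObjectProperty.FullSubcategory Q, ∃ m : ObjectProperty.FullSubcategory P,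
      IsStabilizer P e m.obj n.obj) :
    ∃ (Inv : (ObjectProperty.FullSubcategory P)ᵒᵖ ⥤ ObjectProperty.FullSubcategory Q)
      (Stab : ObjectProperty.FullSubcategory Q ⥤ (ObjectProperty.FullSubcategory P)ᵒᵖ),
      (∀ m : (ObjectProperty.FullSubcategory P)ᵒᵖ, IsInvariantIncl Q e (Inv.obj m).obj m.unop.obj) ∧
      (∀ n : ObjectProperty.FullSubcategory Q, IsStabilizer P e ((Stab.obj n).unop).obj n.obj) ∧
      Nonempty (Stab ⊣ Inv) ∧
      (∀ (n : ObjectProperty.FullSubcategory Q) (m : (ObjectProperty.FullSubcategory P)ᵒᵖ),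
        Subsingleton (n ⟶ Inv.obj m)) :=
  inv_stab_galois_connection_general e P Q hInv hStab
end

section
/- Let (T, μ, η, e) be an augmented monad on C, h : S → T a monad homomorphism, and suppose S has a right adjoint (θ, S ⊣ R, υ). Then for any α : V → U, h fixes α if and only if for every T-action M = (X, r_M), one has R((e∘h)_X) ∘ θ_X ∘ α_M = R(r_M ∘ h_X) ∘ θ_X ∘ α_M. Consequently, if the pair of morphisms R((e∘h)_X) θ_X and R(r_M h_X) θ_X admits an equalizer for every M, these equalizers assemble into a functor which is the h-invariant inclusion. -/
open CategoryTheory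

universe v u

variable {C : Type u} [Category.{v} C]

/-- `α : V ⟶ U` is the `h`-invariant inclusion: it is fixed by `h` and terminal
among natural transformations into the forgetful functor fixed by `h`. -/
def IsInvariantInclusion {T S : Monad C} (e : (T : C ⥤ C) ⟶ 𝟭 C) (h : S ⟶ T)
    {V : T.Algebra ⥤ C} (α : V ⟶ T.forget) : Prop :=
  Fixes e h α ∧
    ∀ (V' : T.Algebra ⥤ C) (α' : V' ⟶ T.forget), Fixes e h α' →
      ∃! β : V' ⟶ V, β ≫ α = α'

/-!
Transposing along `S ⊣ R` turns `S α_M ≫ h ≫ r_M = S α_M ≫ h ≫ e` into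
`α_M ≫ θ ≫ R(h ≫ e) = α_M ≫ θ ≫ R(h ≫ r_M)`. Both sides are components of natural transformations
`U ⟶ U ⋙ R` (transposes of the `S`-actions `h ≫ e` and `h ≫ r` on `U`), so `h` fixes `α` exactly
when `α` equalizes this pair. Pointwise equalizers form their equalizer in the functor category,
and its universal property is the terminality required of the `h`-invariant inclusion.
-/

open Limits

namespace CategoryTheory

section

variable {J D E : Type*} [Category J] [Category D] [Category E]

theorem Adjunction.comp_unit_comp_map_eq_iff {F : D ⥤ E} {G : E ⥤ D} (adj : F ⊣ G) {W X : D}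
    {Y : E} (a : W ⟶ X) (f g : F.obj X ⟶ Y) :
    a ≫ adj.unit.app X ≫ G.map f = a ≫ adj.unit.app X ≫ G.map g ↔ F.map a ≫ f = F.map a ≫ g := by
  simp only [← adj.homEquiv_unit, ← adj.homEquiv_naturality_left, (adj.homEquiv W Y).apply_eq_iff_eq]

def Adjunction.transposeNatTrans {F : D ⥤ E} {G : E ⥤ D} (adj : F ⊣ G) {U : J ⥤ D} {V : J ⥤ E}
    (ρ : U ⋙ F ⟶ V) : U ⟶ V ⋙ G where
  app j := adj.unit.app (U.obj j) ≫ G.map (ρ.app j)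
  naturality {i j} φ := by
    have := ρ.naturality φ
    simp only [Functor.comp_map] at this ⊢
    rw [← adj.unit_naturality_assoc, ← G.map_comp, this, Category.assoc, G.map_comp]

theorem NatTrans.hasLimit_parallelPair_flip_obj {F G : J ⥤ D} (f g : F ⟶ G)
    [∀ j, HasEqualizer (f.app j) (g.app j)] (j : J) :
    HasLimit ((parallelPair f g).flip.obj j) :=
  hasLimit_of_iso (F := parallelPair (f.app j) (g.app j))
    (diagramIsoParallelPair ((parallelPair f g).flip.obj j)).symm

theorem NatTrans.hasEqualizer_of_app {F G : J ⥤ D} (f g : F ⟶ G)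
    [∀ j, HasEqualizer (f.app j) (g.app j)] : HasEqualizer f g :=
  have := NatTrans.hasLimit_parallelPair_flip_obj f g
  inferInstance

noncomputable def NatTrans.isLimitEqualizerForkApp {F G : J ⥤ D} (f g : F ⟶ G)
    [∀ j, HasEqualizer (f.app j) (g.app j)] (j : J) :
    haveI := NatTrans.hasEqualizer_of_app f g
    IsLimit (Fork.ofι ((equalizer.ι f g).app j) (congr_app (equalizer.condition f g) j)) :=
  have := NatTrans.hasLimit_parallelPair_flip_obj f g
  isLimitForkMapOfIsLimit ((evaluation J D).obj j) (equalizer.condition f g)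
    (equalizerIsEqualizer f g)

end

end CategoryTheory

section

variable {T S : Monad C}

def Monad.restrictedAction (h : S ⟶ T) : T.forget ⋙ (S : C ⥤ C) ⟶ T.forget where
  app M := h.app M.A ≫ M.a
  naturality {M N} φ := by
    change (S : C ⥤ C).map φ.f ≫ h.app N.A ≫ N.a = (h.app M.A ≫ M.a) ≫ φ.f
    rw [h.naturality_assoc, φ.h, Category.assoc]

def Monad.augmentedAction (e : (T : C ⥤ C) ⟶ 𝟭 C) (h : S ⟶ T) :
    T.forget ⋙ (S : C ⥤ C) ⟶ T.forget where
  app M := h.app M.A ≫ e.app M.A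
  naturality {M N} φ := by
    change (S : C ⥤ C).map φ.f ≫ h.app N.A ≫ e.app N.A = (h.app M.A ≫ e.app M.A) ≫ φ.f
    rw [h.naturality_assoc, e.naturality, Category.assoc]
    rfl

variable (e : (T : C ⥤ C) ⟶ 𝟭 C) (h : S ⟶ T) {R : C ⥤ C} (adj : (S : C ⥤ C) ⊣ R)
  {V : T.Algebra ⥤ C} (α : V ⟶ T.forget)

theorem fixes_iff_forall_comp_unit_comp_map_eq :
    Fixes e h α ↔ ∀ M : T.Algebra,
      α.app M ≫ adj.unit.app M.A ≫ R.map (h.app M.A ≫ e.app M.A) =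
        α.app M ≫ adj.unit.app M.A ≫ R.map (h.app M.A ≫ M.a) :=
  forall_congr' fun _ => eq_comm.trans (adj.comp_unit_comp_map_eq_iff _ _ _).symm

theorem fixes_iff_comp_transposeNatTrans_eq :
    Fixes e h α ↔ α ≫ adj.transposeNatTrans (Monad.augmentedAction e h) =
      α ≫ adj.transposeNatTrans (Monad.restrictedAction h) := by
  rw [fixes_iff_forall_comp_unit_comp_map_eq e h adj, NatTrans.ext_iff, funext_iff]
  rfl

end

theorem fixes_iff_equalizes_and_invariants_as_equalizers_general {T S : Monad C}
    (e : (T : C ⥤ C) ⟶ 𝟭 C)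
    (h : S ⟶ T) (R : C ⥤ C) (adj : (S : C ⥤ C) ⊣ R) :
    (∀ (V : T.Algebra ⥤ C) (α : V ⟶ T.forget),
      Fixes e h α ↔
        ∀ M : T.Algebra,
          α.app M ≫ adj.unit.app M.A ≫ R.map (h.app M.A ≫ e.app M.A) =
            α.app M ≫ adj.unit.app M.A ≫ R.map (h.app M.A ≫ M.a)) ∧
    ((∀ M : T.Algebra,
        Limits.HasEqualizer (adj.unit.app M.A ≫ R.map (h.app M.A ≫ e.app M.A))
          (adj.unit.app M.A ≫ R.map (h.app M.A ≫ M.a))) →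
      ∃ (V : T.Algebra ⥤ C) (α : V ⟶ T.forget)
        (w : ∀ M : T.Algebra,
          α.app M ≫ (adj.unit.app M.A ≫ R.map (h.app M.A ≫ e.app M.A)) =
            α.app M ≫ (adj.unit.app M.A ≫ R.map (h.app M.A ≫ M.a))),
        (∀ M : T.Algebra, Nonempty (Limits.IsLimit (Limits.Fork.ofι (α.app M) (w M)))) ∧
        IsInvariantInclusion e h α) := by
  refine ⟨fun V α => fixes_iff_forall_comp_unit_comp_map_eq e h adj α, fun hasEq => ?_⟩
  let f := adj.transposeNatTrans (Monad.augmentedAction e h)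
  let g := adj.transposeNatTrans (Monad.restrictedAction h)
  have : ∀ M, HasEqualizer (f.app M) (g.app M) := hasEq
  have := NatTrans.hasEqualizer_of_app f g
  refine ⟨equalizer f g, equalizer.ι f g, fun M => congr_app (equalizer.condition f g) M,
    fun M => ⟨NatTrans.isLimitEqualizerForkApp f g M⟩, ?_, fun V' α' hα' => ?_⟩
  · exact (fixes_iff_comp_transposeNatTrans_eq e h adj _).2 (equalizer.condition f g)
  · exact equalizer.existsUnique α' ((fixes_iff_comp_transposeNatTrans_eq e h adj α').1 hα')

/-- if the monad `S` has a right adjoint `R` (with unit `θ`), then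
`h : S ⟶ T` fixes `α` iff `R((e∘h)_X) ∘ θ_X ∘ α_M = R(r_M ∘ h_X) ∘ θ_X ∘ α_M` for
every `T`-action `M = (X, r_M)`; and if the relevant pairs admit equalizers for
every `M`, these equalizers assemble into the `h`-invariant inclusion. -/
theorem fixes_iff_equalizes_and_invariants_as_equalizers {T S : Monad C}
    (e : (T : C ⥤ C) ⟶ 𝟭 C)
    (he₁ : ∀ X : C, T.η.app X ≫ e.app X = 𝟙 X)
    (he₂ : ∀ X : C, T.μ.app X ≫ e.app X = e.app ((T : C ⥤ C).obj X) ≫ e.app X)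
    (h : S ⟶ T) (R : C ⥤ C) (adj : (S : C ⥤ C) ⊣ R) :
    (∀ (V : T.Algebra ⥤ C) (α : V ⟶ T.forget),
      Fixes e h α ↔
        ∀ M : T.Algebra,
          α.app M ≫ adj.unit.app M.A ≫ R.map (h.app M.A ≫ e.app M.A) =
            α.app M ≫ adj.unit.app M.A ≫ R.map (h.app M.A ≫ M.a)) ∧
    ((∀ M : T.Algebra,
        Limits.HasEqualizer (adj.unit.app M.A ≫ R.map (h.app M.A ≫ e.app M.A))
          (adj.unit.app M.A ≫ R.map (h.app M.A ≫ M.a))) →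
      ∃ (V : T.Algebra ⥤ C) (α : V ⟶ T.forget)
        (w : ∀ M : T.Algebra,
          α.app M ≫ (adj.unit.app M.A ≫ R.map (h.app M.A ≫ e.app M.A)) =
            α.app M ≫ (adj.unit.app M.A ≫ R.map (h.app M.A ≫ M.a))),
        (∀ M : T.Algebra, Nonempty (Limits.IsLimit (Limits.Fork.ofι (α.app M) (w M)))) ∧
        IsInvariantInclusion e h α) :=
  fixes_iff_equalizes_and_invariants_as_equalizers_general e h R adj
end

section
/- Let h : S → T be a monad homomorphism between augmented monads on C, with associated functor H : C^T → C^S, and suppose H has a right adjoint (ζ, H ⊣ K, ω). Then for any α : V → U^T, h fixes α if and only if id_S fixes α̂ : V∘K → U^S, where α̂ = (U^S ω) ∘ (α K). -/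
/-!
Both conditions are pointwise: a morphism `f : X ⟶ N.A` into an `S`-algebra is fixed when
`S f ≫ N.a = S f ≫ (e ∘ h)_N`, and `h` fixes `α` exactly when every `α_M` is fixed in `H M`.
Fixed morphisms are stable under precomposition with anything and under postcomposition with
`S`-algebra morphisms. So `α_{K N}` fixed gives `α̂_N = α_{K N} ≫ ω_N` fixed; conversely the
triangle identity `η_M ≫ ω_{H M} = 𝟙` and naturality of `α` give `α_M = V η_M ≫ α̂_{H M}`.
-/

open CategoryTheory

universe v u

variable {C : Type u} [Category.{v} C]

namespace CategoryTheory.Monad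

variable {S : Monad C}

def FixesMap (ε : (S : C ⥤ C) ⟶ 𝟭 C) (N : S.Algebra) {X : C} (f : X ⟶ N.A) : Prop :=
  S.map f ≫ N.a = S.map f ≫ ε.app N.A

variable {ε : (S : C ⥤ C) ⟶ 𝟭 C}

theorem FixesMap.comp_left {N : S.Algebra} {X Y : C} {f : X ⟶ N.A} (hf : FixesMap ε N f)
    (k : Y ⟶ X) : FixesMap ε N (k ≫ f) := by
  simp only [FixesMap, Functor.map_comp, Category.assoc]
  rw [hf]

theorem FixesMap.comp_hom {N N' : S.Algebra} {X : C} {f : X ⟶ N.A} (hf : FixesMap ε N f)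
    (g : N ⟶ N') : FixesMap ε N' (f ≫ g.f) := by
  simp only [FixesMap, Functor.map_comp, Category.assoc, g.h]
  rw [reassoc_of% hf, ε.naturality, Functor.id_map]

theorem fixes_iff_forall_fixesMap {T : Monad C} (e : (T : C ⥤ C) ⟶ 𝟭 C) (h : S ⟶ T)
    {V : T.Algebra ⥤ C} (α : V ⟶ T.forget) :
    Fixes e h α ↔
      ∀ M, FixesMap (h.toNatTrans ≫ e) ((algebraFunctorOfMonadHom h).obj M) (α.app M) :=
  Iff.rfl

theorem fixes_id_iff_forall_fixesMap {V : S.Algebra ⥤ C} (β : V ⟶ S.forget) :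
    Fixes ε (𝟙 S) β ↔ ∀ N, FixesMap ε N (β.app N) := by
  refine forall_congr' fun N => ?_
  erw [Category.id_comp, Category.id_comp]
  rfl

theorem app_eq_map_unit_comp_app_comp_counit_f {T : Monad C} {h : S ⟶ T}
    {K : S.Algebra ⥤ T.Algebra} (adj : algebraFunctorOfMonadHom h ⊣ K)
    {V : T.Algebra ⥤ C} (α : V ⟶ T.forget) (M : T.Algebra) :
    α.app M = V.map (adj.unit.app M) ≫ α.app (K.obj ((algebraFunctorOfMonadHom h).obj M)) ≫
      (adj.counit.app ((algebraFunctorOfMonadHom h).obj M)).f := by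
  have triangle : (adj.unit.app M).f ≫ (adj.counit.app _).f = 𝟙 M.A :=
    congrArg Algebra.Hom.f (adj.left_triangle_components M)
  -- `rw` cannot see through `((algebraFunctorOfMonadHom h).obj M).A = M.A`, so compose by hand
  refine (Category.comp_id _).symm.trans (Eq.trans ?_ (α.naturality_assoc _ _).symm)
  exact congrArg (α.app M ≫ ·) triangle.symm

end CategoryTheory.Monad

open Monad in
theorem fixes_iff_fixes_along_right_adjoint_general {T S : Monad C}
    (e : (T : C ⥤ C) ⟶ 𝟭 C)
    (h : S ⟶ T)
    (K : S.Algebra ⥤ T.Algebra)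
    (adjH : Monad.algebraFunctorOfMonadHom h ⊣ K)
    (V : T.Algebra ⥤ C) (α : V ⟶ T.forget)
    (αhat : K ⋙ V ⟶ S.forget)
    (hαhat : ∀ N : S.Algebra,
      αhat.app N = α.app (K.obj N) ≫ (adjH.counit.app N).f) :
    Fixes e h α ↔ Fixes (h.toNatTrans ≫ e) (𝟙 S) αhat := by
  rw [fixes_iff_forall_fixesMap, fixes_id_iff_forall_fixesMap]
  constructor
  · intro hα N
    exact hαhat N ▸ (hα (K.obj N)).comp_hom (adjH.counit.app N)
  · intro hαhat' M
    have hα : α.app M = V.map (adjH.unit.app M) ≫ αhat.app _ := by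
      rw [hαhat]
      exact app_eq_map_unit_comp_app_comp_counit_f adjH α M
    exact hα ▸ (hαhat' _).comp_left _

/-- if the functor `H : C^T ⥤ C^S` associated to a monad
homomorphism `h : S ⟶ T` has a right adjoint `K` (with counit `ω`), then for any
`α : V ⟶ U^T`, `h` fixes `α` iff `id_S` fixes `α̂ = (U^S ω) ∘ (α K) : V∘K ⟶ U^S`,
with respect to the induced augmentation `e ∘ h` of `S`. -/
theorem fixes_iff_fixes_along_right_adjoint {T S : Monad C}
    (e : (T : C ⥤ C) ⟶ 𝟭 C)
    (he₁ : ∀ X : C, T.η.app X ≫ e.app X = 𝟙 X)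
    (he₂ : ∀ X : C, T.μ.app X ≫ e.app X = e.app ((T : C ⥤ C).obj X) ≫ e.app X)
    (h : S ⟶ T)
    (K : S.Algebra ⥤ T.Algebra)
    (adjH : Monad.algebraFunctorOfMonadHom h ⊣ K)
    (V : T.Algebra ⥤ C) (α : V ⟶ T.forget)
    (αhat : K ⋙ V ⟶ S.forget)
    (hαhat : ∀ N : S.Algebra,
      αhat.app N = α.app (K.obj N) ≫ (adjH.counit.app N).f) :
    Fixes e h α ↔ Fixes (h.toNatTrans ≫ e) (𝟙 S) αhat :=
  fixes_iff_fixes_along_right_adjoint_general e h K adjH V α αhat hαhat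
end

section
/- Let h : S → T be a monad homomorphism between augmented monads on C, with associated functor H : C^T → C^S admitting a right adjoint K. If γ^S : Γ^S → U^S is the id_S-invariant inclusion, then γ^S H : Γ^S ∘ H → U^T (using U^S H = U^T) is the h-invariant inclusion. -/
/-!
Precomposition with `H` has the left adjoint "precomposition with `K`". Whiskering by `H`
turns an `id_S`-fixing arrow into an `h`-fixing one, because `H (A, a) = (A, h ≫ a)`.
Conversely the transpose `α_{K N} ≫ ε_N` of an `h`-fixing `α` is `id_S`-fixing, since the
counit `ε_N` is an `S`-algebra map and `h`, `e` are natural. A right adjoint with these two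
properties carries terminal fixing arrows to terminal fixing arrows.
-/

open CategoryTheory

universe v u

variable {C : Type u} [Category.{v} C]

namespace CategoryTheory

def IsTerminalAmong {𝒜 : Type*} [Category 𝒜] {X : 𝒜}
    (P : ∀ {Y : 𝒜}, (Y ⟶ X) → Prop) {Γ : 𝒜} (γ : Γ ⟶ X) : Prop :=
  P γ ∧ ∀ (Y : 𝒜) (f : Y ⟶ X), P f → ∃! β : Y ⟶ Γ, β ≫ γ = f

theorem Adjunction.isTerminalAmong_map {𝒜 ℬ : Type*} [Category 𝒜] [Category ℬ]
    {F : 𝒜 ⥤ ℬ} {G : ℬ ⥤ 𝒜} (adj : F ⊣ G) {X : ℬ}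
    {P : ∀ {Y : ℬ}, (Y ⟶ X) → Prop} {Q : ∀ {V : 𝒜}, (V ⟶ G.obj X) → Prop}
    (hPQ : ∀ {Y : ℬ} (f : Y ⟶ X), P f → Q (G.map f))
    (hQP : ∀ {V : 𝒜} (g : V ⟶ G.obj X), Q g → P ((adj.homEquiv V X).symm g))
    {Γ : ℬ} {γ : Γ ⟶ X} (hγ : IsTerminalAmong P γ) : IsTerminalAmong Q (G.map γ) := by
  refine ⟨hPQ γ hγ.1, fun V g hg => ?_⟩
  refine (Equiv.existsUnique_congr (adj.homEquiv V Γ).symm fun β => ?_).mpr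
    (hγ.2 _ _ (hQP g hg))
  rw [← adj.homEquiv_naturality_right_symm, (adj.homEquiv V X).symm.apply_eq_iff_eq]

end CategoryTheory

theorem isInvariantInclusion_iff {T S : Monad C} {e : (T : C ⥤ C) ⟶ 𝟭 C} {h : S ⟶ T}
    {V : T.Algebra ⥤ C} {α : V ⟶ T.forget} :
    IsInvariantInclusion e h α ↔ IsTerminalAmong (Fixes e h) α :=
  Iff.rfl

namespace CategoryTheory.Monad

theorem fixes_id_iff {S : Monad C} {e : (S : C ⥤ C) ⟶ 𝟭 C} {V : S.Algebra ⥤ C}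
    {α : V ⟶ S.forget} :
    Fixes e (𝟙 S) α ↔
      ∀ N : S.Algebra, S.map (α.app N) ≫ N.a = S.map (α.app N) ≫ e.app N.A :=
  -- `erw`: the identities live on `S.obj (S.forget.obj N)`, only defeq to `S.obj N.A`
  forall_congr' fun _ => by erw [Category.id_comp, Category.id_comp]

variable {T S : Monad C} (e : (T : C ⥤ C) ⟶ 𝟭 C) (h : S ⟶ T)

theorem fixes_whiskerLeft_algebraFunctorOfMonadHom {V : S.Algebra ⥤ C} {α : V ⟶ S.forget}
    (hα : Fixes (h.toNatTrans ≫ e) (𝟙 S) α) :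
    Fixes e h (Functor.whiskerLeft (algebraFunctorOfMonadHom h) α : _ ⟶ T.forget) :=
  fun M => fixes_id_iff.mp hα ((algebraFunctorOfMonadHom h).obj M)

theorem map_comp_a_eq_of_fixed {M : T.Algebra} {N : S.Algebra} {f : M.A ⟶ N.A}
    (hf : S.map f ≫ N.a = h.app M.A ≫ M.a ≫ f) {Y : C} {a : Y ⟶ M.A}
    (ha : S.map a ≫ h.app M.A ≫ M.a = S.map a ≫ h.app M.A ≫ e.app M.A) :
    S.map (a ≫ f) ≫ N.a = S.map (a ≫ f) ≫ h.app N.A ≫ e.app N.A :=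
  calc S.map (a ≫ f) ≫ N.a = S.map a ≫ h.app M.A ≫ M.a ≫ f := by
        rw [S.map_comp, Category.assoc, hf]
    _ = S.map a ≫ h.app M.A ≫ e.app M.A ≫ f := by
        simpa only [Category.assoc] using ha =≫ f
    _ = S.map (a ≫ f) ≫ h.app N.A ≫ e.app N.A := by
        rw [S.map_comp, Category.assoc, h.naturality_assoc f, e.naturality f, Functor.id_map]

-- `T.forget` is `algebraFunctorOfMonadHom h ⋙ S.forget` only up to defeq; typing `α` into the
-- latter keeps `homEquiv` applicable.
theorem fixes_homEquiv_symm {K : S.Algebra ⥤ T.Algebra}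
    (adj : algebraFunctorOfMonadHom h ⊣ K) {V : T.Algebra ⥤ C}
    {α : V ⟶ algebraFunctorOfMonadHom h ⋙ S.forget} (hα : Fixes e h α) :
    Fixes (h.toNatTrans ≫ e) (𝟙 S) (((adj.whiskerLeft C).homEquiv V S.forget).symm α) := by
  refine fixes_id_iff.mpr fun N => ?_
  have hε :
      S.map (adj.counit.app N).f ≫ N.a = h.app _ ≫ (K.obj N).a ≫ (adj.counit.app N).f :=
    (adj.counit.app N).h.trans (Category.assoc _ _ _)
  have hα' : (((adj.whiskerLeft C).homEquiv V S.forget).symm α).app N =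
      α.app (K.obj N) ≫ (adj.counit.app N).f := by
    rw [Adjunction.homEquiv_counit, NatTrans.comp_app, Adjunction.whiskerLeft_counit_app_app]
    rfl
  rw [hα']
  exact map_comp_a_eq_of_fixed e h hε (hα (K.obj N))

end CategoryTheory.Monad

theorem invariant_inclusion_pullback_general {T S : Monad C}
    (e : (T : C ⥤ C) ⟶ 𝟭 C)
    (h : S ⟶ T)
    (K : S.Algebra ⥤ T.Algebra)
    (adjH : Monad.algebraFunctorOfMonadHom h ⊣ K)
    (ΓS : S.Algebra ⥤ C) (γS : ΓS ⟶ S.forget)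
    (hγS : IsInvariantInclusion (h.toNatTrans ≫ e) (𝟙 S) γS)
    (γT : Monad.algebraFunctorOfMonadHom h ⋙ ΓS ⟶ T.forget)
    (hγT : ∀ M : T.Algebra,
      γT.app M = γS.app ((Monad.algebraFunctorOfMonadHom h).obj M)) :
    IsInvariantInclusion e h γT := by
  rw [isInvariantInclusion_iff] at hγS ⊢
  obtain rfl :
      γT = ((Functor.whiskeringLeft _ _ C).obj (Monad.algebraFunctorOfMonadHom h)).map γS :=
    NatTrans.ext (funext hγT)
  exact (adjH.whiskerLeft C).isTerminalAmong_map
    (fun _ => Monad.fixes_whiskerLeft_algebraFunctorOfMonadHom e h)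
    (fun _ => Monad.fixes_homEquiv_symm e h adjH) hγS

/-- if `H : C^T ⥤ C^S` (the functor associated to `h : S ⟶ T`) has a
right adjoint `K`, and `γˢ : Γˢ ⟶ U^S` is the `id_S`-invariant inclusion (for the
induced augmentation `e∘h`), then `γˢ H : Γˢ∘H ⟶ U^T` is the `h`-invariant
inclusion. -/
theorem invariant_inclusion_pullback {T S : Monad C}
    (e : (T : C ⥤ C) ⟶ 𝟭 C)
    (he₁ : ∀ X : C, T.η.app X ≫ e.app X = 𝟙 X)
    (he₂ : ∀ X : C, T.μ.app X ≫ e.app X = e.app ((T : C ⥤ C).obj X) ≫ e.app X)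
    (h : S ⟶ T)
    (K : S.Algebra ⥤ T.Algebra)
    (adjH : Monad.algebraFunctorOfMonadHom h ⊣ K)
    (ΓS : S.Algebra ⥤ C) (γS : ΓS ⟶ S.forget)
    (hγS : IsInvariantInclusion (h.toNatTrans ≫ e) (𝟙 S) γS)
    (γT : Monad.algebraFunctorOfMonadHom h ⋙ ΓS ⟶ T.forget)
    (hγT : ∀ M : T.Algebra,
      γT.app M = γS.app ((Monad.algebraFunctorOfMonadHom h).obj M)) :
    IsInvariantInclusion e h γT :=
  invariant_inclusion_pullback_general e h K adjH ΓS γS hγS γT hγT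
end

section
/- Let W : D → C and G : D' → D be functors such that the internal Ends End[W] and End[W∘G] both exist. Then the canonical morphism |G : End[W] → End[W∘G], defined as the unique morphism into the end with λ'_X ∘ |G = λ_{GX} for all X in D', is a monoid homomorphism. -/
open CategoryTheory MonoidalCategory MonoidalClosed

universe v v' v'' u u' u''

variable {C : Type u} [Category.{v} C] [MonoidalCategory C]
variable {D : Type u'} [Category.{v'} D] {D' : Type u''} [Category.{v''} D']

/-- A wedge for the bifunctor `(d₁, d₂) ↦ [W d₁, W d₂]`. -/
def IsWedge (W : D ⥤ C) [∀ d : D, Closed (W.obj d)] (N : C)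
    (π : ∀ d : D, N ⟶ (ihom (W.obj d)).obj (W.obj d)) : Prop :=
  ∀ {d d' : D} (f : d ⟶ d'),
    π d ≫ (ihom (W.obj d)).map (W.map f) =
      π d' ≫ (MonoidalClosed.pre (W.map f)).app (W.obj d')

/-- `(N, π)` is the left internal End `End[W] = ∫_{d} [W d, W d]`. -/
def IsInternalEnd (W : D ⥤ C) [∀ d : D, Closed (W.obj d)] (N : C)
    (π : ∀ d : D, N ⟶ (ihom (W.obj d)).obj (W.obj d)) : Prop :=
  IsWedge W N π ∧
    ∀ (Z : C) (q : ∀ d : D, Z ⟶ (ihom (W.obj d)).obj (W.obj d)),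
      IsWedge W Z q → ∃! t : Z ⟶ N, ∀ d : D, t ≫ π d = q d

/-!
Morphisms into an internal End are determined by their composites with the projections. After
composing with `λ'_X`, the relation `λ'_X ∘ |G = λ_{GX}` turns both sides of each monoid identity
into the unit, resp. the internal composition, of `[WGX, WGX]`.
-/

theorem IsWedge.comp {W : D ⥤ C} [∀ d : D, Closed (W.obj d)] {N Z : C}
    {π : ∀ d : D, N ⟶ (ihom (W.obj d)).obj (W.obj d)} (hπ : IsWedge W N π) (g : Z ⟶ N) :
    IsWedge W Z (fun d => g ≫ π d) := by
  intro _ _ f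
  simp only [Category.assoc, hπ f]

theorem IsInternalEnd.hom_ext {W : D ⥤ C} [∀ d : D, Closed (W.obj d)] {N Z : C}
    {π : ∀ d : D, N ⟶ (ihom (W.obj d)).obj (W.obj d)} (hN : IsInternalEnd W N π)
    {f g : Z ⟶ N} (h : ∀ d : D, f ≫ π d = g ≫ π d) : f = g := by
  obtain ⟨t, -, ht⟩ := hN.2 Z (fun d => g ≫ π d) (IsWedge.comp hN.1 g)
  exact (ht f h).trans (ht g fun _ => rfl).symm

/-- for `W : D ⥤ C` and `G : D' ⥤ D` such that `End[W]` and
`End[W∘G]` exist (with their canonical monoid structures), the canonical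
restriction morphism `|G : End[W] ⟶ End[W∘G]`, determined by
`λ'_X ∘ |G = λ_{G X}`, is a monoid homomorphism. -/
theorem internalEnd_restriction_monoidHom (W : D ⥤ C) (G : D' ⥤ D)
    [∀ d : D, Closed (W.obj d)]
    (N : C) (π : ∀ d : D, N ⟶ (ihom (W.obj d)).obj (W.obj d))
    (hN : IsInternalEnd W N π)
    (N' : C) (π' : ∀ X : D', N' ⟶ (ihom (W.obj (G.obj X))).obj (W.obj (G.obj X)))
    (hN' : @IsInternalEnd C _ _ D' _ (G ⋙ W) (fun X => (inferInstance : Closed (W.obj (G.obj X)))) N' π')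
    -- the canonical monoid structures:
    (one : 𝟙_ C ⟶ N) (mul : N ⊗ N ⟶ N)
    (hone : ∀ d : D, one ≫ π d = MonoidalClosed.id (W.obj d))
    (hmul : ∀ d : D, mul ≫ π d =
      (π d ⊗ₘ π d) ≫ MonoidalClosed.comp (W.obj d) (W.obj d) (W.obj d))
    (one' : 𝟙_ C ⟶ N') (mul' : N' ⊗ N' ⟶ N')
    (hone' : ∀ X : D', one' ≫ π' X = MonoidalClosed.id (W.obj (G.obj X)))
    (hmul' : ∀ X : D', mul' ≫ π' X = (π' X ⊗ₘ π' X) ≫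
      MonoidalClosed.comp (W.obj (G.obj X)) (W.obj (G.obj X)) (W.obj (G.obj X)))
    -- the restriction morphism:
    (r : N ⟶ N') (hr : ∀ X : D', r ≫ π' X = π (G.obj X)) :
    one ≫ r = one' ∧ mul ≫ r = (r ⊗ₘ r) ≫ mul' := by
  -- instance search does not see through `Functor.comp_obj`
  let (X : D') : Closed ((G ⋙ W).obj X) := inferInstanceAs (Closed (W.obj (G.obj X)))
  constructor
  · refine hN'.hom_ext fun X => ?_
    rw [Category.assoc, hr, hone, hone']
  · refine hN'.hom_ext fun X => ?_
    rw [Category.assoc, hr, hmul, Category.assoc, hmul', ← hr X,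
      tensorHom_comp_tensorHom_assoc]
end
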